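/- arXiv:2212.07786 — 2 statements merged into one kernel-verified Lean document; each statement's English description precedes it below -/
import Mathlib

section
/- In the white noise case Δₙ = δ², a sequence a lies in the range of the learned regularization (i.e., (aₙ/ḡₙ) ∈ ℓ² with ḡₙ = σₙΠₙ/(σₙ²Πₙ + δ²)) if and only if Σₙ aₙ²/(Πₙ²σₙ²) < ∞. -/
private lemma sum_sq_summable {u v : ℕ → ℝ} (hu : Summable (fun n => (u n)^2))
    (hv : Summable (fun n => (v n)^2)) : Summable (fun n => (u n + v n)^2) := by
  apply Summable.of_nonneg_of_le (fun n => sq_nonneg _)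
    (fun n => ?_) ((hu.add hv).mul_left 2)
  nlinarith [sq_nonneg (u n - v n)]

/-- White noise case Δₙ = δ²: with ḡₙ = σₙPₙ/(σₙ²Pₙ + δ²), the range condition
(aₙ/ḡₙ) ∈ ℓ² holds iff Σₙ aₙ²/(Pₙ²σₙ²) < ∞. -/
theorem white_noise_range_condition
    (σ P a : ℕ → ℝ) (δ : ℝ) (hσ : ∀ n, 0 < σ n) (hσb : ∃ M, ∀ n, σ n ≤ M)
    (hP : ∀ n, 0 < P n) (hδ : 0 < δ)
    (ha : Summable (fun n => (a n)^2)) :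
    Summable (fun n => (a n / (σ n * P n / ((σ n)^2 * P n + δ^2)))^2)
      ↔ Summable (fun n => (a n)^2 / ((P n)^2 * (σ n)^2)) := by
  obtain ⟨M, hM⟩ := hσb
  set f : ℕ → ℝ := fun n => a n * σ n with hf
  set g : ℕ → ℝ := fun n => a n * (δ^2 / (σ n * P n)) with hg
  have hσn : ∀ n, σ n ≠ 0 := fun n => (hσ n).ne'
  have hPn : ∀ n, P n ≠ 0 := fun n => (hP n).ne'
  have hden : ∀ n, (σ n)^2 * P n + δ^2 ≠ 0 := fun n => (add_pos (mul_pos (pow_pos (hσ n) 2) (hP n)) (pow_pos hδ 2)).ne'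
  have key : ∀ n, (a n / (σ n * P n / ((σ n)^2 * P n + δ^2)))^2 = (f n + g n)^2 := by
    intro n
    simp only [hf, hg]
    rw [div_div_eq_mul_div]
    field_simp [hσn n, hPn n]
  have hgsq : ∀ n, (g n)^2 = (a n)^2 / ((P n)^2 * (σ n)^2) * (δ^2)^2 := by
    intro n
    simp only [hg]
    field_simp [hσn n, hPn n]
  have hf2 : Summable (fun n => (f n)^2) := by
    apply Summable.of_nonneg_of_le (fun n => sq_nonneg _) (fun n => ?_) (ha.mul_right (M^2))
    simp only [hf, mul_pow]
    have h1 : (σ n)^2 ≤ M^2 := by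
      have := hσ n
      have := hM n
      nlinarith
    nlinarith [sq_nonneg (a n)]
  have hiff : Summable (fun n => (g n)^2) ↔
      Summable (fun n => (a n)^2 / ((P n)^2 * (σ n)^2)) := by
    rw [show (fun n => (g n)^2) = fun n => (a n)^2 / ((P n)^2 * (σ n)^2) * (δ^2)^2 from
      funext hgsq]
    exact summable_mul_right_iff (by positivity)
  rw [show (fun n => (a n / (σ n * P n / ((σ n)^2 * P n + δ^2)))^2)
      = fun n => (f n + g n)^2 from funext key, ← hiff]
  constructor
  · intro h
    have : Summable (fun n => ((f n + g n) + (-(f n)))^2) := by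
      apply sum_sq_summable h
      simpa using hf2
    simpa using this
  · intro h
    exact sum_sq_summable hf2 h
end

section
/- Let a ∈ ℓ²(ℕ), σₙ > 0 nonincreasing, Πₙ > 0 summable, Δₙ(δ) ≤ δ², Δₙ(δ) ≥ cδ²Πₙ with c > 0, and ḡₙ(δ) = σₙΠₙ/(σₙ²Πₙ + Δₙ(δ)). Then e(a,δ) := Σₙ [(1 − σₙḡₙ(δ))² aₙ² + ḡₙ(δ)² Δₙ(δ)] → 0 as δ → 0. -/
/-- Pointwise convergence of the learned spectral regularization: for a ∈ ℓ²,
σₙ nonincreasing positive, Pₙ positive summable, 0 < Δₙ(δ) ≤ δ² and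
Δₙ(δ) ≥ cδ²Pₙ, with ḡₙ(δ) = σₙPₙ/(σₙ²Pₙ + Δₙ(δ)),
e(a,δ) = Σₙ [(1 − σₙḡₙ(δ))² aₙ² + ḡₙ(δ)² Δₙ(δ)] → 0 as δ → 0⁺. -/
theorem pointwise_convergence
    (a σ P : ℕ → ℝ) (Δ : ℝ → ℕ → ℝ)
    (ha : Summable (fun n => (a n)^2))
    (hσ : ∀ n, 0 < σ n) (hσm : Antitone σ)
    (hP : ∀ n, 0 < P n) (hPsum : Summable P)
    (c : ℝ) (hc : 0 < c)
    (hΔpos : ∀ δ > (0:ℝ), ∀ n, 0 < Δ δ n)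
    (hΔle : ∀ δ > (0:ℝ), ∀ n, Δ δ n ≤ δ^2)
    (hΔge : ∀ δ > (0:ℝ), ∀ n, Δ δ n ≥ c * δ^2 * P n) :
    Filter.Tendsto
      (fun δ => ∑' n,
        ((1 - σ n * (σ n * P n / ((σ n)^2 * P n + Δ δ n)))^2 * (a n)^2
          + (σ n * P n / ((σ n)^2 * P n + Δ δ n))^2 * Δ δ n))
      (nhdsWithin 0 (Set.Ioi 0)) (nhds 0) := by
  set F : ℝ → ℕ → ℝ := fun δ n =>
    (1 - σ n * (σ n * P n / ((σ n)^2 * P n + Δ δ n)))^2 * (a n)^2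
      + (σ n * P n / ((σ n)^2 * P n + Δ δ n))^2 * Δ δ n with hF
  have hx : ∀ n, 0 < (σ n)^2 * P n := fun n => mul_pos (pow_pos (hσ n) 2) (hP n)
  -- rewrite first factor
  have hkey : ∀ δ > (0:ℝ), ∀ n,
      F δ n = (Δ δ n / ((σ n)^2 * P n + Δ δ n))^2 * (a n)^2
        + (σ n * P n / ((σ n)^2 * P n + Δ δ n))^2 * Δ δ n := by
    intro δ hδ n
    have hy : 0 < Δ δ n := hΔpos δ hδ n
    have hxy : (0:ℝ) < (σ n)^2 * P n + Δ δ n := by linarith [hx n]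
    have hxy' : ((σ n)^2 * P n + Δ δ n) ≠ 0 := hxy.ne'
    have : 1 - σ n * (σ n * P n / ((σ n)^2 * P n + Δ δ n))
        = Δ δ n / ((σ n)^2 * P n + Δ δ n) := by
      field_simp
      ring
    simp [hF, this]
  have hsum : Summable (fun n => (a n)^2 + P n / 4) :=
    ha.add (hPsum.div_const 4)
  have hbound : ∀ᶠ δ in nhdsWithin (0:ℝ) (Set.Ioi 0),
      ∀ n, ‖F δ n‖ ≤ (a n)^2 + P n / 4 := by
    filter_upwards [self_mem_nhdsWithin] with δ hδ n
    have hδ' : (0:ℝ) < δ := hδ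
    have hy : 0 < Δ δ n := hΔpos δ hδ' n
    have hxy : (0:ℝ) < (σ n)^2 * P n + Δ δ n := by linarith [hx n]
    rw [hkey δ hδ' n]
    have hnn : 0 ≤ (Δ δ n / ((σ n)^2 * P n + Δ δ n))^2 * (a n)^2
        + (σ n * P n / ((σ n)^2 * P n + Δ δ n))^2 * Δ δ n :=
      add_nonneg (mul_nonneg (sq_nonneg _) (sq_nonneg _))
        (mul_nonneg (sq_nonneg _) hy.le)
    rw [Real.norm_eq_abs, abs_of_nonneg hnn]
    have h1 : (Δ δ n / ((σ n)^2 * P n + Δ δ n))^2 * (a n)^2 ≤ (a n)^2 := by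
      have hle : Δ δ n / ((σ n)^2 * P n + Δ δ n) ≤ 1 := by
        rw [div_le_one hxy]; linarith [hx n]
      have hsq : (Δ δ n / ((σ n)^2 * P n + Δ δ n))^2 ≤ 1 := by
        nlinarith [div_nonneg hy.le hxy.le]
      exact mul_le_of_le_one_left (sq_nonneg _) hsq
    have h2 : (σ n * P n / ((σ n)^2 * P n + Δ δ n))^2 * Δ δ n ≤ P n / 4 := by
      rw [div_pow, div_mul_eq_mul_div,
        div_le_div_iff₀ (by positivity) (by norm_num : (0:ℝ) < 4)]
      nlinarith [sq_nonneg ((σ n)^2 * P n - Δ δ n), hP n, hy, sq_nonneg (σ n)]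
    linarith
  have hlim : ∀ n, Filter.Tendsto (fun δ => F δ n)
      (nhdsWithin 0 (Set.Ioi 0)) (nhds 0) := by
    intro n
    have hg : Filter.Tendsto
        (fun δ : ℝ => (a n)^2 / ((σ n)^2 * P n)^2 * δ^4 + δ^2 / (σ n)^2)
        (nhdsWithin 0 (Set.Ioi 0)) (nhds 0) := by
      have hc2 : Filter.Tendsto
          (fun δ : ℝ => (a n)^2 / ((σ n)^2 * P n)^2 * δ^4 + δ^2 / (σ n)^2)
          (nhds 0) (nhds ((a n)^2 / ((σ n)^2 * P n)^2 * 0^4 + 0^2 / (σ n)^2)) := by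
        apply Filter.Tendsto.add
        · exact (tendsto_const_nhds.mul ((continuous_pow 4).tendsto 0))
        · exact ((continuous_pow 2).tendsto 0).div_const _
      have h0 : ((a n)^2 / ((σ n)^2 * P n)^2 * (0:ℝ)^4 + 0^2 / (σ n)^2) = 0 := by norm_num
      rw [h0] at hc2
      exact hc2.mono_left nhdsWithin_le_nhds
    refine squeeze_zero' ?_ ?_ hg
    · filter_upwards [self_mem_nhdsWithin] with δ hδ
      have hy : 0 < Δ δ n := hΔpos δ hδ n
      rw [hkey δ hδ n]
      exact add_nonneg (mul_nonneg (sq_nonneg _) (sq_nonneg _))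
        (mul_nonneg (sq_nonneg _) hy.le)
    · filter_upwards [self_mem_nhdsWithin] with δ hδ
      have hδ' : (0:ℝ) < δ := hδ
      have hy : 0 < Δ δ n := hΔpos δ hδ' n
      have hxy : (0:ℝ) < (σ n)^2 * P n + Δ δ n := by linarith [hx n]
      rw [hkey δ hδ' n]
      have hle : Δ δ n / ((σ n)^2 * P n + Δ δ n) ≤ δ^2 / ((σ n)^2 * P n) :=
        div_le_div₀ (sq_nonneg δ) (hΔle δ hδ' n) (hx n) (le_add_of_nonneg_right hy.le)
      have h1 : (Δ δ n / ((σ n)^2 * P n + Δ δ n))^2 * (a n)^2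
          ≤ (a n)^2 / ((σ n)^2 * P n)^2 * δ^4 := by
        have hsq := pow_le_pow_left₀ (div_nonneg hy.le hxy.le) hle 2
        calc (Δ δ n / ((σ n)^2 * P n + Δ δ n))^2 * (a n)^2
            ≤ (δ^2 / ((σ n)^2 * P n))^2 * (a n)^2 :=
              mul_le_mul_of_nonneg_right hsq (sq_nonneg _)
          _ = (a n)^2 / ((σ n)^2 * P n)^2 * δ^4 := by
              rw [div_pow]; ring
      have h2 : (σ n * P n / ((σ n)^2 * P n + Δ δ n))^2 * Δ δ n ≤ δ^2 / (σ n)^2 := by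
        have hnum : 0 < σ n * P n := mul_pos (hσ n) (hP n)
        have hle2 : σ n * P n / ((σ n)^2 * P n + Δ δ n) ≤ σ n * P n / ((σ n)^2 * P n) :=
          div_le_div_of_nonneg_left hnum.le (hx n) (le_add_of_nonneg_right hy.le)
        have heq : σ n * P n / ((σ n)^2 * P n) = 1 / σ n := by
          have h1 := (hσ n).ne'
          have h2 := (hP n).ne'
          field_simp
        have hsq : (σ n * P n / ((σ n)^2 * P n + Δ δ n))^2 ≤ (1 / σ n)^2 := by
          rw [← heq]
          exact pow_le_pow_left₀ (div_nonneg hnum.le hxy.le) hle2 2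
        calc (σ n * P n / ((σ n)^2 * P n + Δ δ n))^2 * Δ δ n
            ≤ (1 / σ n)^2 * δ^2 :=
              mul_le_mul hsq (hΔle δ hδ' n) hy.le (sq_nonneg _)
          _ = δ^2 / (σ n)^2 := by rw [div_pow]; ring
      linarith
  have hmain := tendsto_tsum_of_dominated_convergence (g := fun _ : ℕ => (0:ℝ))
    hsum hlim hbound
  simpa using hmain
end
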